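/- Let U be a polygon for the potential with combinatorial data (v_W, S, p) and an interior partitioned into pieces of areas 2aσ (at each A-vertex), 2bσ (B-vertex), 2cσ (C-vertex) and σ (middle triangles). Then Area(U) = (8·v_W − 5S − 8p)·σ. -/

import Mathlib

theorem tile_count_eq {α : Type*} [CommRing α] {a b c vA vB vC vW p P Q R S f6 : α}
    (hS : S = P + Q + R)
    (hA : a * vA = vW + P - S - p)
    (hB : b * vB = vW + Q - S - p)
    (hC : c * vC = vW + R - S - p)
    (hf6 : f6 = vW - 2 * p - S) :
    2 * a * vA + 2 * b * vB + 2 * c * vC + vW + f6 = 8 * vW - 5 * S - 8 * p := by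
  linear_combination 2 * hA + 2 * hB + 2 * hC + hf6 - 2 * hS

/-- Lemma 8.2 (area formula): a polygon `U` for the potential tiles into `v_A` polygons of
area `2aσ`, `v_B` of area `2bσ`, `v_C` of area `2cσ`, and `v_W + f₆` middle triangles of
area `σ`, where the `(a,b,c)`-diagram identities `a·v_A = v_W + P − S − p` (and similarly
for `b, c`), `f₆ = v_W − 2p − S` and `S = P + Q + R` hold.  Then
`Area(U) = (8·v_W − 5S − 8p)·σ`. -/
theorem area_formula_combinatorial (a b c : ℕ) (vA vB vC vW p P Q R S f6 : ℤ)
    (σ Area : ℝ)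
    (hS : S = P + Q + R)
    (hA : (a : ℤ) * vA = vW + P - S - p)
    (hB : (b : ℤ) * vB = vW + Q - S - p)
    (hC : (c : ℤ) * vC = vW + R - S - p)
    (hf6 : f6 = vW - 2 * p - S)
    (hArea : Area =
      ((2 * (a : ℤ) * vA + 2 * (b : ℤ) * vB + 2 * (c : ℤ) * vC + vW + f6 : ℤ) : ℝ) * σ) :
    Area = ((8 * vW - 5 * S - 8 * p : ℤ) : ℝ) * σ := by
  rw [hArea, tile_count_eq hS hA hB hC hf6]
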